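/- arXiv:1210.3285 — 10 statements merged into one kernel-verified Lean document; each statement's English description precedes it below -/
import Mathlib

section
/- In any magma with a unary operation ' satisfying x·(x'·x) = x, x·(x'·(y·(y'·((z·u)'·w')'))) = y·(y'·(x·(x'·((w·z)·u)))), and x'' = x, the operation · is associative: (x·y)·z = x·(y·z). -/
/-!
Write `P x t = x * (x⁻¹ * t)`. With (C), axiom (B) says `P x (P y b) = P y (P x a)` for
`a = w⁻¹ * z * u` and `b = ((z * u)⁻¹ * w)⁻¹`, while (A) says `P x x = x`; evaluating at
`x, y ∈ {a, b}` forces `b = a`. The resulting law `((z * u)⁻¹ * w)⁻¹ = w⁻¹ * z * u` together with (A)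
already implies associativity, by the equational reasoning familiar from inverse semigroups:
`x * x⁻¹` behaves as an idempotent fixing `x` on the left, which yields
`x * (y * z) * w = x * y * (z * w)`, and then `(x * y) * z = x * (y * z)` by expanding
`x = x * x⁻¹ * x`.
-/

theorem eq_of_forall_swap {S : Type*} {P : S → S → S} {a b : S} (hP : ∀ x, P x x = x)
    (h : ∀ x y, P x (P y b) = P y (P x a)) : b = a := by
  have hab : P a b = P b a := by simpa only [hP] using h a b
  calc b = P b (P b b) := by rw [hP, hP]
    _ = P b (P a b) := by rw [h b b, hab]
    _ = P a (P a b) := by rw [h b a, hab]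
    _ = a := by rw [h a a, hP, hP]

class IsRegularInvMagma (S : Type*) [Mul S] [InvolutiveInv S] : Prop where
  mul_inv_mul_self (x : S) : x * (x⁻¹ * x) = x
  inv_inv_mul_mul (x y z : S) : ((x * y)⁻¹ * z)⁻¹ = z⁻¹ * x * y

theorem IsRegularInvMagma.of_two_base {S : Type*} [Mul S] [InvolutiveInv S]
    (hA : ∀ x : S, x * (x⁻¹ * x) = x)
    (hB : ∀ x y z u w : S, x * (x⁻¹ * (y * (y⁻¹ * ((z * u)⁻¹ * w⁻¹)⁻¹))) =
      y * (y⁻¹ * (x * (x⁻¹ * (w * z * u))))) :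
    IsRegularInvMagma S where
  mul_inv_mul_self := hA
  inv_inv_mul_mul x y z :=
    eq_of_forall_swap (P := fun x t => x * (x⁻¹ * t)) hA fun a b => by
      simpa only [inv_inv] using hB a b x y z⁻¹

namespace IsRegularInvMagma

variable {S : Type*} [Mul S] [InvolutiveInv S] [IsRegularInvMagma S]

theorem inv_mul_mul_inv_rev (x y z : S) : (x⁻¹ * y * z)⁻¹ = (y * z)⁻¹ * x := by
  rw [← inv_inv_mul_mul, inv_inv]

theorem mul_mul_inv_rev (x y z : S) : (x * y * z)⁻¹ = (y * z)⁻¹ * x⁻¹ := by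
  simpa only [inv_inv] using inv_mul_mul_inv_rev x⁻¹ y z

theorem inv_mul_inv_rev (x y : S) : (x⁻¹ * y)⁻¹ = y⁻¹ * x * (x⁻¹ * x) := by
  simpa only [mul_inv_mul_self] using inv_inv_mul_mul x (x⁻¹ * x) y

theorem mul_inv_mul_mul_inv (x y : S) : (x * y)⁻¹ * x * x⁻¹ = (x * y)⁻¹ := by
  calc (x * y)⁻¹ * x * x⁻¹ = (x⁻¹ * x * y)⁻¹ * x⁻¹ := by rw [inv_mul_mul_inv_rev]
    _ = (x * (x⁻¹ * x) * y)⁻¹ := (mul_mul_inv_rev _ _ _).symm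
    _ = (x * y)⁻¹ := by rw [mul_inv_mul_self]

theorem mul_inv_self_mul_self (x : S) : x * x⁻¹ * x = x := by
  have h (y : S) : y⁻¹ * y * y⁻¹ = y⁻¹ := by
    simpa only [mul_inv_mul_self] using mul_inv_mul_mul_inv y (y⁻¹ * y)
  simpa only [inv_inv] using h x⁻¹

theorem inv_mul_inv_self_mul (x : S) : (x * x⁻¹)⁻¹ * x = x := by
  have h := mul_inv_self_mul_self x⁻¹
  rw [inv_inv] at h
  rw [← inv_mul_mul_inv_rev, h, inv_inv]

theorem inv_mul_inv_self (x : S) : (x * x⁻¹)⁻¹ = x * x⁻¹ := by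
  simpa only [inv_mul_inv_self_mul] using (mul_inv_mul_mul_inv x x⁻¹).symm

theorem inv_mul_mul_inv_self (x y : S) : (x * y)⁻¹ * (x * x⁻¹) = (x * y)⁻¹ := by
  rw [← inv_mul_mul_inv_rev, inv_mul_inv_self_mul]

theorem mul_inv_self_mul_mul (x y : S) : x * x⁻¹ * (x * y) = x * y := by
  rw [← inv_mul_inv_self, ← inv_mul_mul_inv_rev, mul_inv_mul_mul_inv, inv_inv]

theorem mul_mul_inv_mul_self_mul_inv (x y : S) : x * y * (y⁻¹ * y) * y⁻¹ = x * y * y⁻¹ := by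
  calc x * y * (y⁻¹ * y) * y⁻¹ = (y⁻¹ * x⁻¹)⁻¹ * y⁻¹ := by rw [inv_mul_inv_rev, inv_inv]
    _ = (y * y⁻¹ * x⁻¹)⁻¹ := (mul_mul_inv_rev _ _ _).symm
    _ = ((y * y⁻¹)⁻¹ * x⁻¹)⁻¹ := by rw [inv_mul_inv_self]
    _ = x * y * y⁻¹ := by rw [inv_inv_mul_mul, inv_inv]

theorem mul_mul_inv_mul_mul (x y z : S) : x * y * y⁻¹ * (y * z) = x * y * z := by
  calc x * y * y⁻¹ * (y * z) = (y⁻¹ * x⁻¹)⁻¹ * y⁻¹ * (y * z) := by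
        rw [← mul_mul_inv_mul_self_mul_inv, inv_mul_inv_rev, inv_inv]
    _ = (y * y⁻¹ * x⁻¹)⁻¹ * (y * z) := by rw [mul_mul_inv_rev]
    _ = ((y * z)⁻¹ * (y * y⁻¹) * x⁻¹)⁻¹ := (inv_mul_mul_inv_rev _ _ _).symm
    _ = ((y * z)⁻¹ * x⁻¹)⁻¹ := by rw [inv_mul_mul_inv_self]
    _ = x * y * z := by rw [inv_inv_mul_mul, inv_inv]

theorem mul_inv_self_mul_assoc (x y : S) : x * x⁻¹ * y = x * (x⁻¹ * y) := by
  simpa only [inv_inv, mul_inv_self_mul_self] using (mul_mul_inv_mul_mul x x⁻¹ y).symm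

theorem mul_inv_mul_mul (x y : S) : x * (x⁻¹ * (x * y)) = x * y := by
  rw [← mul_inv_self_mul_assoc, mul_inv_self_mul_mul]

-- `x * a * b = ((a * b)⁻¹ * x⁻¹)⁻¹` depends on `a` and `b` only through `a * b`.
theorem mul_mul_congr {a b c d : S} (h : a * b = c * d) (x : S) : x * a * b = x * c * d := by
  rw [← inv_inv x, ← inv_inv_mul_mul, h, inv_inv_mul_mul]

theorem mul_mul_inv_mul_assoc (x y z : S) : x * y * y⁻¹ * z = x * y * (y⁻¹ * z) := by
  calc x * y * y⁻¹ * z = x * y * y⁻¹ * (y * (y⁻¹ * z)) :=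
        mul_mul_congr (by simpa only [inv_inv] using (mul_inv_mul_mul y⁻¹ z).symm) _
    _ = x * y * (y⁻¹ * z) := mul_mul_inv_mul_mul x y (y⁻¹ * z)

theorem inv_mul_mul_assoc (x y z : S) : (y * x)⁻¹ * y * z = (y * x)⁻¹ * (y * z) := by
  rw [← mul_mul_inv_mul_mul, mul_inv_mul_mul_inv]

theorem mul_mul_inv_mul_self_mul (x y z : S) : x * y * (y⁻¹ * y) * z = x * y * z := by
  have ht : (y⁻¹ * x⁻¹)⁻¹ = x * y * (y⁻¹ * y) := by rw [inv_mul_inv_rev, inv_inv]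
  calc x * y * (y⁻¹ * y) * z = (y⁻¹ * x⁻¹)⁻¹ * y⁻¹ * y * z := by
        simpa only [inv_inv, ht] using congrArg (· * z) (mul_inv_mul_mul_inv y⁻¹ x⁻¹).symm
    _ = (y⁻¹ * x⁻¹)⁻¹ * y⁻¹ * (y * z) := by
        simpa only [inv_inv] using mul_mul_inv_mul_assoc (y⁻¹ * x⁻¹)⁻¹ y⁻¹ z
    _ = x * y * (y⁻¹ * y) * (y⁻¹ * (y * z)) := by rw [inv_mul_mul_assoc, ht]
    _ = x * y * y⁻¹ * (y * z) :=
        mul_mul_congr (by simpa only [inv_inv] using mul_inv_self_mul_mul y⁻¹ (y * z)) _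
    _ = x * y * z := mul_mul_inv_mul_mul x y z

theorem mul_mul_mul_assoc (x y z w : S) : x * (y * z) * w = x * y * (z * w) := by
  calc x * (y * z) * w = ((y * z * w)⁻¹ * x⁻¹)⁻¹ := by rw [inv_inv_mul_mul, inv_inv]
    _ = ((z * w)⁻¹ * y⁻¹ * x⁻¹)⁻¹ := by rw [mul_mul_inv_rev]
    _ = (y⁻¹ * x⁻¹)⁻¹ * (z * w) := inv_mul_mul_inv_rev _ _ _
    _ = x * y * (y⁻¹ * y) * (z * w) := by rw [inv_mul_inv_rev, inv_inv]
    _ = x * y * (z * w) := mul_mul_inv_mul_self_mul _ _ _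

protected theorem mul_assoc (x y z : S) : x * y * z = x * (y * z) := by
  calc x * y * z = x * x⁻¹ * (x * y) * z := by rw [mul_inv_self_mul_mul]
    _ = x * x⁻¹ * x * (y * z) := mul_mul_mul_assoc _ _ _ _
    _ = x * (y * z) := by rw [mul_inv_self_mul_self]

end IsRegularInvMagma

theorem two_base_implies_assoc {S : Type*} (m : S → S → S) (i : S → S)
    (hA : ∀ x, m x (m (i x) x) = x)
    (hB : ∀ x y z u w,
      m x (m (i x) (m y (m (i y) (i (m (i (m z u)) (i w)))))) =
      m y (m (i y) (m x (m (i x) (m (m w z) u)))))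
    (hC : ∀ x, i (i x) = x) :
    ∀ x y z, m (m x y) z = m x (m y z) := by
  let _ : Mul S := ⟨m⟩
  let _ : InvolutiveInv S := { inv := i, inv_inv := hC }
  have := IsRegularInvMagma.of_two_base hA hB
  exact IsRegularInvMagma.mul_assoc
end

section
/- In any magma with a unary operation ' satisfying x·(x'·x) = x, the identity x·(x'·(y·(y'·((z·u)'·w')'))) = y·(y'·(x·(x'·((w·z)·u)))), x'' = x, and associativity (x·y)·z = x·(y·z), the identity (x·x')·(y'·y) = (y'·y)·(x·x') holds (idempotents of the form x·x' and y'·y commute). -/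
/-!
Write `e_x = x x'`. Axiom (A) makes every `e_x` idempotent, and then (B) with `x = y` says that,
to the right of any `e_s`, the map `'` behaves like an anti-involution fixing every `e_t`:
`e_s (pq)' = e_s q'p'` and `e_s e_t' = e_s e_t`. Feeding these back into (B) shows that
`e_a e_b` and `e_b e_a` agree as left multiplications. For `P = e_a e_b`, `Q = e_b e_a` this
gives `P = Q Q'`, so `P` is itself of the form `e_t`, and then
`P = Q Q' P = Q Q' P' = Q Q' Q = Q`.
-/

namespace TwoBase

variable {S : Type*} [Semigroup S] {i : S → S}

theorem isIdempotentElem_mul_inv (hA : ∀ x : S, x * i x * x = x) (x : S) :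
    IsIdempotentElem (x * i x) := by
  rw [IsIdempotentElem, ← mul_assoc, hA]

theorem inv_mul_mul_inv (hA : ∀ x : S, x * i x * x = x) (hC : ∀ x : S, i (i x) = x) (x : S) :
    i x * (x * i x) = i x := by
  simpa only [hC, mul_assoc] using hA (i x)

variable (i) in
def ProjEq (x y : S) : Prop :=
  ∀ s, s * i s * x = s * i s * y

theorem ProjEq.symm {x y : S} (h : ProjEq i x y) : ProjEq i y x :=
  fun s => (h s).symm

section Axioms

variable (hA : ∀ x : S, x * i x * x = x)
  (hB : ∀ x y z u w : S,
    x * i x * (y * i y) * i (i (z * u) * i w) = y * i y * (x * i x) * (w * z * u))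
include hA hB

theorem projEq_inv_inv_mul_inv (z u w : S) : ProjEq i (i (i (z * u) * i w)) (w * z * u) :=
  fun s => by simpa only [(isIdempotentElem_mul_inv hA s).eq] using hB s s z u w

theorem projEq_inv_mul_inv_self (hC : ∀ x : S, i (i x) = x) (t : S) :
    ProjEq i (i (t * i t)) (t * i t) := by
  have h := projEq_inv_inv_mul_inv hA hB (i t) (t * i t) t
  rwa [inv_mul_mul_inv hA hC, hC, (isIdempotentElem_mul_inv hA t).eq] at h

theorem projEq_inv_mul (hC : ∀ x : S, i (i x) = x) (p q : S) :
    ProjEq i (i (p * q)) (i q * i p) := by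
  have h := projEq_inv_inv_mul_inv hA hB (i p) (p * i p) (i q)
  rwa [inv_mul_mul_inv hA hC, hC, hC, mul_assoc, inv_mul_mul_inv hA hC] at h

theorem mul_inv_mul_mul_inv_mul_comm (p q t : S) :
    p * i p * (q * i q) * t = q * i q * (p * i p) * t := by
  have h := hB p q (i t) t t
  rwa [hA, mul_assoc, projEq_inv_inv_mul_inv hA hB (i t) t t q, hA, ← mul_assoc] at h

theorem projEq_inv_mul_inv_mul_mul_inv (hC : ∀ x : S, i (i x) = x) (p q : S) :
    ProjEq i (i (p * i p * (q * i q))) (q * i q * (p * i p)) := by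
  have hq := projEq_inv_mul_inv_self hA hB hC q
  have hp := projEq_inv_mul_inv_self hA hB hC p
  intro s
  calc s * i s * i (p * i p * (q * i q))
      = s * i s * i (q * i q) * i (p * i p) := by
        rw [projEq_inv_mul hA hB hC _ _ s, ← mul_assoc]
    _ = s * i s * (q * i q * (p * i p)) := by rw [hq s, mul_assoc _ (q * i q), hp q]

theorem mul_inv_mul_mul_inv_eq_mul_inv_self (hC : ∀ x : S, i (i x) = x) (a b : S) :
    a * i a * (b * i b) = b * i b * (a * i a) * i (b * i b * (a * i a)) := by
  have he := (isIdempotentElem_mul_inv hA a).eq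
  have hf := (isIdempotentElem_mul_inv hA b).eq
  calc a * i a * (b * i b)
      = a * i a * (b * i b) * i (a * i a * (b * i b)) * i (b * i b * (a * i a)) := by
        rw [projEq_inv_mul_inv_mul_mul_inv hA hB hC b a, hA]
    _ = a * i a * (b * i b * (b * i b * (a * i a))) * i (b * i b * (a * i a)) := by
        rw [mul_assoc (a * i a), projEq_inv_mul_inv_mul_mul_inv hA hB hC a b b]
    _ = a * i a * (b * i b) * (a * i a * i (b * i b * (a * i a))) := by
        rw [← mul_assoc (b * i b), hf, ← mul_assoc, mul_assoc _ (a * i a)]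
    _ = b * i b * (a * i a) * i (b * i b * (a * i a)) := by
        rw [mul_inv_mul_mul_inv_mul_comm hA hB, mul_assoc (b * i b), ← mul_assoc (a * i a), he,
          ← mul_assoc]

theorem mul_inv_mul_mul_inv_comm (hC : ∀ x : S, i (i x) = x) (a b : S) :
    a * i a * (b * i b) = b * i b * (a * i a) := by
  set P := a * i a * (b * i b)
  set Q := b * i b * (a * i a)
  have hP : P = Q * i Q := mul_inv_mul_mul_inv_eq_mul_inv_self hA hB hC a b
  calc P = Q * i Q * (Q * i Q) := by rw [(isIdempotentElem_mul_inv hA Q).eq, hP]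
    _ = Q * i Q * i (Q * i Q) := (projEq_inv_mul_inv_self hA hB hC Q Q).symm
    _ = Q * i Q * i P := by rw [← hP]
    _ = Q * i Q * Q := projEq_inv_mul_inv_mul_mul_inv hA hB hC a b Q
    _ = Q := hA Q

end Axioms

end TwoBase

open TwoBase in
theorem two_base_implies_idempotents_commute {S : Type*} (m : S → S → S) (i : S → S)
    (hA : ∀ x, m x (m (i x) x) = x)
    (hB : ∀ x y z u w,
      m x (m (i x) (m y (m (i y) (i (m (i (m z u)) (i w)))))) =
      m y (m (i y) (m x (m (i x) (m (m w z) u)))))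
    (hC : ∀ x, i (i x) = x)
    (hD : ∀ x y z, m (m x y) z = m x (m y z)) :
    ∀ x y, m (m x (i x)) (m (i y) y) = m (m (i y) y) (m x (i x)) := by
  let _ : Semigroup S := { mul := m, mul_assoc := hD }
  have hA' : ∀ x : S, x * i x * x = x := fun x => (mul_assoc _ _ _).trans (hA x)
  have hB' : ∀ x y z u w : S,
      x * i x * (y * i y) * i (i (z * u) * i w) = y * i y * (x * i x) * (w * z * u) := by
    have hB : ∀ x y z u w : S, x * (i x * (y * (i y * i (i (z * u) * i w)))) =
        y * (i y * (x * (i x * (w * z * u)))) := hB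
    simpa only [mul_assoc] using hB
  intro x y
  have h := mul_inv_mul_mul_inv_comm hA' hB' hC x (i y)
  rw [hC] at h
  exact h
end

section
/- In any semigroup with a unary operation ' satisfying x·x'·x = x, x''= x, and x'·x·y·y' = y·y'·x'·x, the identities x'·x·x' = x' and (x·y)' = y'·x' hold; in particular such algebras are exactly the inverse semigroups with ' being the natural inversion. -/
/-!
The axioms make `i x` an inverse of `x` in the sense of regular semigroups, and they force
every idempotent to be fixed by `i`; the third axiom applied to two idempotents then says that
idempotents commute. A regular semigroup with commuting idempotents has unique inverses, and
`i y * i x` is an inverse of `x * y`, so both identities follow from uniqueness.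
-/

section RegularSemigroup

variable {S : Type*} [Semigroup S]

lemma isIdempotentElem_mul_of_mul_mul_eq_self {a b : S} (h : a * b * a = a) :
    IsIdempotentElem (a * b) := by
  rw [IsIdempotentElem, ← mul_assoc, h]

lemma isIdempotentElem_mul_swap_of_mul_mul_eq_self {a b : S} (h : a * b * a = a) :
    IsIdempotentElem (b * a) := by
  rw [IsIdempotentElem, ← mul_assoc, mul_assoc b a b, mul_assoc b, h]

lemma mul_mul_rev_mul_of_idempotents_commute
    (hcomm : ∀ e f : S, IsIdempotentElem e → IsIdempotentElem f → Commute e f)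
    {x x' y y' : S} (hx : x * x' * x = x) (hy : y * y' * y = y) :
    x * y * (y' * x') * (x * y) = x * y :=
  calc x * y * (y' * x') * (x * y) = x * ((y * y') * (x' * x)) * y := by simp only [mul_assoc]
    _ = x * ((x' * x) * (y * y')) * y := by
      rw [(hcomm _ _ (isIdempotentElem_mul_of_mul_mul_eq_self hy)
        (isIdempotentElem_mul_swap_of_mul_mul_eq_self hx)).eq]
    _ = (x * x' * x) * (y * y' * y) := by simp only [mul_assoc]
    _ = x * y := by rw [hx, hy]

lemma eq_of_inverses_of_idempotents_commute
    (hcomm : ∀ e f : S, IsIdempotentElem e → IsIdempotentElem f → Commute e f)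
    {a b c : S} (hab : a * b * a = a) (hba : b * a * b = b)
    (hac : a * c * a = a) (hca : c * a * c = c) : b = c := by
  have hb : b = c * a * b :=
    calc b = b * (a * c * a) * b := by rw [hac, hba]
      _ = (b * a) * (c * a) * b := by simp only [mul_assoc]
      _ = (c * a) * (b * a) * b := by
        rw [(hcomm _ _ (isIdempotentElem_mul_swap_of_mul_mul_eq_self hab)
          (isIdempotentElem_mul_swap_of_mul_mul_eq_self hac)).eq]
      _ = c * a * (b * a * b) := by simp only [mul_assoc]
      _ = c * a * b := by rw [hba]
  have hc : c = c * a * b :=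
    calc c = c * (a * b * a) * c := by rw [hab, hca]
      _ = c * ((a * b) * (a * c)) := by simp only [mul_assoc]
      _ = c * ((a * c) * (a * b)) := by
        rw [(hcomm _ _ (isIdempotentElem_mul_of_mul_mul_eq_self hab)
          (isIdempotentElem_mul_of_mul_mul_eq_self hac)).eq]
      _ = (c * a * c) * a * b := by simp only [mul_assoc]
      _ = c * a * b := by rw [hca]
  rw [hb, ← hc]

end RegularSemigroup

section FourBase

variable {S : Type*} [Semigroup S] {i : S → S}

lemma inv_mul_mul_inv_of_involutive (h1 : ∀ x : S, x * i x * x = x)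
    (h2 : Function.Involutive i) (x : S) : i x * x * i x = i x := by
  simpa only [h2 x] using h1 (i x)

lemma inv_eq_self_of_isIdempotentElem (h1 : ∀ x : S, x * i x * x = x)
    (h2 : Function.Involutive i) (h3 : ∀ x y : S, i x * x * y * i y = y * i y * (i x * x))
    {e : S} (he : IsIdempotentElem e) : i e = e := by
  have hsandwich : e * i e * i e * e = i e := by
    have h := h3 (i e) (i e)
    rw [h2 e] at h
    rw [h, ← mul_assoc, he.mul_mul_self, inv_mul_mul_inv_of_involutive h1 h2]
  have hleft : e * i e = i e :=
    calc e * i e = e * (e * i e * i e * e) := by rw [hsandwich]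
      _ = e * i e * i e * e := by simp only [mul_assoc, he.mul_self_mul]
      _ = i e := hsandwich
  have hright : i e * e = i e :=
    calc i e * e = e * i e * i e * e * e := by rw [hsandwich]
      _ = e * i e * i e * e := by simp only [mul_assoc, he.eq]
      _ = i e := hsandwich
  calc i e = e * i e * e := by rw [hleft, hright]
    _ = e := h1 e

lemma commute_of_isIdempotentElem (h1 : ∀ x : S, x * i x * x = x)
    (h2 : Function.Involutive i) (h3 : ∀ x y : S, i x * x * y * i y = y * i y * (i x * x))
    {e f : S} (he : IsIdempotentElem e) (hf : IsIdempotentElem f) : Commute e f := by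
  have h := h3 e f
  rw [inv_eq_self_of_isIdempotentElem h1 h2 h3 he, inv_eq_self_of_isIdempotentElem h1 h2 h3 hf,
    he.eq, hf.mul_mul_self, hf.eq] at h
  exact h

end FourBase

theorem four_base_gives_inverse_semigroup {S : Type*} [Semigroup S] (i : S → S)
    (h1 : ∀ x : S, x * i x * x = x)
    (h2 : ∀ x : S, i (i x) = x)
    (h3 : ∀ x y : S, i x * x * y * i y = y * i y * (i x * x)) :
    (∀ x : S, i x * x * i x = i x) ∧
    (∀ x y : S, i (x * y) = i y * i x) ∧
    (∀ a b : S, a * b * a = a → b * a * b = b → b = i a) := by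
  have hinv : ∀ x : S, i x * x * i x = i x := inv_mul_mul_inv_of_involutive h1 h2
  have hcomm : ∀ e f : S, IsIdempotentElem e → IsIdempotentElem f → Commute e f :=
    fun _ _ => commute_of_isIdempotentElem h1 h2 h3
  have huniq : ∀ a b : S, a * b * a = a → b * a * b = b → b = i a :=
    fun a _ hab hba => eq_of_inverses_of_idempotents_commute hcomm hab hba (h1 a) (hinv a)
  refine ⟨hinv, fun x y => (huniq _ _ ?_ ?_).symm, huniq⟩
  · exact mul_mul_rev_mul_of_idempotents_commute hcomm (h1 x) (h1 y)
  · exact mul_mul_rev_mul_of_idempotents_commute hcomm (hinv y) (hinv x)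
end

section
/- In any semigroup with a unary operation ' satisfying the identities x·(y·z'') = (x·y)·z, x = (x·x')·x, and (x·x')·(y'·y) = (y'·y)·(x·x'), the identity x'' = x holds, and consequently x·x'·x = x and x'·x·x' = x'. -/
/-!
Write `e x = x⁻¹ * x` and `f x = x * x⁻¹`. The first identity says that products associate as soon as
the right factor is a double inverse, and `x * x⁻¹ * x = x` gives `x⁻¹ * x⁻¹⁻¹ = x⁻¹ * x`, so that
every `e y` is some `f x` and the `e`'s commute with one another. The crux is `x⁻¹⁻¹⁻¹ = x⁻¹`: since
`x⁻¹⁻¹⁻¹ = e x⁻¹⁻¹ * x⁻¹` and `e x * e x⁻¹⁻¹ = e x⁻¹⁻¹ * e x = e x⁻¹⁻¹`, `e x` fixes `x⁻¹⁻¹⁻¹`, and then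
`x⁻¹⁻¹⁻¹ = (e x)² * x⁻¹ = x⁻¹`. After this the first identity becomes plain associativity and
`x * y⁻¹⁻¹ = x * y`. Now `x` and `x⁻¹⁻¹` are both inverses of `x⁻¹`, and the commuting idempotents
`f x` and `e x⁻¹` force them to agree: `x⁻¹⁻¹ = e x⁻¹ * f x * x = f x * e x⁻¹ * x = x`.
-/

namespace AKIdentities

variable {S : Type*} [Mul S] [Inv S]

theorem mul_inv_inv_mul_inv_mul (h_assoc : ∀ x y z : S, x * (y * z⁻¹⁻¹) = x * y * z)
    (h_reg : ∀ x : S, x * x⁻¹ * x = x) (w y : S) : w * y⁻¹⁻¹ * y⁻¹ * y = w * y⁻¹⁻¹ := by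
  rw [← h_assoc w, ← h_assoc, h_reg]

theorem inv_mul_inv_inv (h_assoc : ∀ x y z : S, x * (y * z⁻¹⁻¹) = x * y * z)
    (h_reg : ∀ x : S, x * x⁻¹ * x = x) (x : S) : x⁻¹ * x⁻¹⁻¹ = x⁻¹ * x := by
  simpa only [h_reg] using (mul_inv_inv_mul_inv_mul h_assoc h_reg x⁻¹ x).symm

theorem inv_inv_mul_inv_mul (h_assoc : ∀ x y z : S, x * (y * z⁻¹⁻¹) = x * y * z)
    (h_reg : ∀ x : S, x * x⁻¹ * x = x) (x : S) : x⁻¹⁻¹ * x⁻¹ * x = x⁻¹⁻¹ := by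
  simpa only [h_reg] using mul_inv_inv_mul_inv_mul h_assoc h_reg (x⁻¹⁻¹ * x⁻¹⁻¹⁻¹) x

theorem mul_inv_inv_mul_inv_mul_self (h_assoc : ∀ x y z : S, x * (y * z⁻¹⁻¹) = x * y * z)
    (h_reg : ∀ x : S, x * x⁻¹ * x = x) (w y : S) : w * y⁻¹⁻¹ * (y⁻¹ * y) = w * y⁻¹⁻¹ := by
  rw [← inv_mul_inv_inv h_assoc h_reg, h_assoc, mul_inv_inv_mul_inv_mul h_assoc h_reg]

theorem inv_mul_mul_inv (h_assoc : ∀ x y z : S, x * (y * z⁻¹⁻¹) = x * y * z)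
    (h_reg : ∀ x : S, x * x⁻¹ * x = x) (x : S) : x⁻¹ * x * x⁻¹ = x⁻¹ := by
  simpa only [inv_mul_inv_inv h_assoc h_reg] using h_reg x⁻¹

theorem isIdempotentElem_inv_mul (h_assoc : ∀ x y z : S, x * (y * z⁻¹⁻¹) = x * y * z)
    (h_reg : ∀ x : S, x * x⁻¹ * x = x) (x : S) : IsIdempotentElem (x⁻¹ * x) := by
  calc x⁻¹ * x * (x⁻¹ * x) = x⁻¹ * x * (x⁻¹ * x⁻¹⁻¹) := by rw [inv_mul_inv_inv h_assoc h_reg]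
    _ = x⁻¹ * x * x⁻¹ * x := h_assoc _ _ _
    _ = x⁻¹ * x := by rw [inv_mul_mul_inv h_assoc h_reg]

theorem inv_mul_commute (h_assoc : ∀ x y z : S, x * (y * z⁻¹⁻¹) = x * y * z)
    (h_reg : ∀ x : S, x * x⁻¹ * x = x) (h_comm : ∀ x y : S, Commute (x * x⁻¹) (y⁻¹ * y))
    (x y : S) : Commute (x⁻¹ * x) (y⁻¹ * y) := by
  simpa only [inv_mul_inv_inv h_assoc h_reg] using h_comm x⁻¹ y

theorem inv_inv_inv (h_assoc : ∀ x y z : S, x * (y * z⁻¹⁻¹) = x * y * z)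
    (h_reg : ∀ x : S, x * x⁻¹ * x = x) (h_comm : ∀ x y : S, Commute (x * x⁻¹) (y⁻¹ * y))
    (x : S) : x⁻¹⁻¹⁻¹ = x⁻¹ := by
  set e := x⁻¹ * x
  set g := x⁻¹⁻¹⁻¹ * x⁻¹⁻¹
  have hg_fix : g * x⁻¹⁻¹⁻¹ = x⁻¹⁻¹⁻¹ := by
    simpa only [inv_mul_inv_inv h_assoc h_reg x⁻¹⁻¹] using h_reg x⁻¹⁻¹⁻¹
  have hg_mul : g * x⁻¹ = x⁻¹⁻¹⁻¹ := inv_inv_mul_inv_mul h_assoc h_reg x⁻¹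
  have heg : e * g = g := by
    rw [(inv_mul_commute h_assoc h_reg h_comm x x⁻¹⁻¹).eq]
    exact mul_inv_inv_mul_inv_mul_self h_assoc h_reg x⁻¹⁻¹⁻¹ x
  have he_fix : e * x⁻¹⁻¹⁻¹ = x⁻¹⁻¹⁻¹ := by
    calc e * x⁻¹⁻¹⁻¹ = e * (g * x⁻¹⁻¹⁻¹) := by rw [hg_fix]
      _ = e * g * x⁻¹ := h_assoc _ _ _
      _ = x⁻¹⁻¹⁻¹ := by rw [heg, hg_mul]
  calc x⁻¹⁻¹⁻¹ = e * (e * x⁻¹⁻¹⁻¹) := by rw [he_fix, he_fix]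
    _ = e * e * x⁻¹ := h_assoc _ _ _
    _ = x⁻¹ := by rw [(isIdempotentElem_inv_mul h_assoc h_reg x).eq, inv_mul_mul_inv h_assoc h_reg]

theorem mul_mul_inv (h_assoc : ∀ x y z : S, x * (y * z⁻¹⁻¹) = x * y * z)
    (h_reg : ∀ x : S, x * x⁻¹ * x = x) (h_comm : ∀ x y : S, Commute (x * x⁻¹) (y⁻¹ * y))
    (x y z : S) : x * y * z⁻¹ = x * (y * z⁻¹) := by
  rw [← h_assoc, inv_inv_inv h_assoc h_reg h_comm]

theorem mul_inv_inv (h_assoc : ∀ x y z : S, x * (y * z⁻¹⁻¹) = x * y * z)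
    (h_reg : ∀ x : S, x * x⁻¹ * x = x) (h_comm : ∀ x y : S, Commute (x * x⁻¹) (y⁻¹ * y))
    (x y : S) : x * y⁻¹⁻¹ = x * y :=
  calc x * y⁻¹⁻¹ = x * x⁻¹ * x * y⁻¹⁻¹ := by rw [h_reg]
    _ = x * x⁻¹ * (x * y⁻¹⁻¹) := mul_mul_inv h_assoc h_reg h_comm _ _ _
    _ = x * y := by rw [h_assoc, h_reg]

theorem mul_assoc_of_mul_mul_inv_inv (h_assoc : ∀ x y z : S, x * (y * z⁻¹⁻¹) = x * y * z)
    (h_reg : ∀ x : S, x * x⁻¹ * x = x) (h_comm : ∀ x y : S, Commute (x * x⁻¹) (y⁻¹ * y))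
    (x y z : S) : x * y * z = x * (y * z) := by
  rw [← h_assoc, mul_inv_inv h_assoc h_reg h_comm]

theorem inv_inv_eq_self (h_assoc : ∀ x y z : S, x * (y * z⁻¹⁻¹) = x * y * z)
    (h_reg : ∀ x : S, x * x⁻¹ * x = x) (h_comm : ∀ x y : S, Commute (x * x⁻¹) (y⁻¹ * y))
    (x : S) : x⁻¹⁻¹ = x := by
  have assoc := mul_assoc_of_mul_mul_inv_inv h_assoc h_reg h_comm
  calc x⁻¹⁻¹ = x⁻¹⁻¹ * x⁻¹ * x := (inv_inv_mul_inv_mul h_assoc h_reg x).symm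
    _ = x⁻¹⁻¹ * x⁻¹ * (x * x⁻¹) * x := by rw [assoc (x⁻¹⁻¹ * x⁻¹), h_reg]
    _ = x * x⁻¹ * (x⁻¹⁻¹ * x⁻¹) * x := by rw [(h_comm x x⁻¹).eq]
    _ = x * (x⁻¹ * x⁻¹⁻¹ * x⁻¹) * x := by simp only [assoc]
    _ = x := by rw [h_reg, h_reg]

end AKIdentities

theorem AK_three_base {S : Type*} (m : S → S → S) (i : S → S)
    (h1 : ∀ x y z, m x (m y (i (i z))) = m (m x y) z)
    (h2 : ∀ x, m (m x (i x)) x = x)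
    (h3 : ∀ x y, m (m x (i x)) (m (i y) y) = m (m (i y) y) (m x (i x))) :
    (∀ x, i (i x) = x) ∧
    (∀ x, m (m x (i x)) x = x) ∧
    (∀ x, m (m (i x) x) (i x) = i x) := by
  let : Mul S := ⟨m⟩
  let : Inv S := ⟨i⟩
  exact ⟨AKIdentities.inv_inv_eq_self h1 h2 h3, h2, AKIdentities.inv_mul_mul_inv h1 h2⟩
end

section
/- In the magma with x·(x'·x) = x and the long identity, the derived identity ((x·y)'·z')' = (z·x)·y holds. -/
/-! Writing `L a t := a·(a'·t)`, axiom (A) says `L a a = a` and axiom (B) says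
`L a (L b P) = L b (L a Q)` with `P = ((x·y)'·z')'` and `Q = (z·x)·y`. Specialising `a, b` to
`P, Q` in all four ways and cancelling with idempotence forces `P = Q`. -/

theorem eq_of_idem_of_forall_left_swap {α : Type*} (L : α → α → α) (hL : ∀ a, L a a = a)
    {p q : α} (h : ∀ a b, L a (L b p) = L b (L a q)) : p = q := by
  have hp : p = L p (L p q) := by simpa only [hL] using h p p
  have hswap : L q p = L p q := by simpa only [hL] using h q p
  have hq : L q (L q p) = q := by simpa only [hL] using h q q
  calc p = L p (L p q) := hp
    _ = L p (L q p) := by rw [hswap]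
    _ = L q (L p q) := h p q
    _ = L q (L q p) := by rw [hswap]
    _ = q := hq

theorem two_base_derived_10 {S : Type*} (m : S → S → S) (i : S → S)
    (hA : ∀ x, m x (m (i x) x) = x)
    (hB : ∀ x y z u w,
      m x (m (i x) (m y (m (i y) (i (m (i (m z u)) (i w)))))) =
      m y (m (i y) (m x (m (i x) (m (m w z) u))))) :
    ∀ x y z, i (m (i (m x y)) (i z)) = m (m z x) y := fun x y z =>
  eq_of_idem_of_forall_left_swap (fun a t => m a (m (i a) t)) hA fun a b => hB a b x y z
end

section
/- In the magma with x·(x'·x) = x and the long identity, the derived identity (x·y)·(y'·y) = (y'·x')' holds. -/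
/-!
Writing `t a b := a·(a'·b)`, axiom (A) says that `t` is idempotent and axiom (B) says
`t x (t y p) = t y (t x q)` for `p = ((z·u)'·w')'` and `q = (w·z)·u`. For an idempotent `t`
this exchange law forces `p = q`, so `((z·u)'·w')' = (w·z)·u`; taking `z = y`, `u = y'·y`,
`w = x` and simplifying `y·(y'·y) = y` gives the theorem.
-/

theorem eq_of_forall_exchange {S : Type*} {t : S → S → S} (ht : ∀ x, t x x = x) {p q : S}
    (h : ∀ x y, t x (t y p) = t y (t x q)) : p = q := by
  have hqp : t q p = t p q := by simpa only [ht] using h q p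
  have hq : t q (t p q) = q := by rw [← hqp]; simpa only [ht] using h q q
  calc p = t p (t p p) := by rw [ht, ht]
    _ = t p (t p q) := h p p
    _ = t p (t q p) := by rw [hqp]
    _ = t q (t p q) := h p q
    _ = q := hq

theorem inv_mul_inv_eq_mul_mul {S : Type*} (m : S → S → S) (i : S → S)
    (hA : ∀ x, m x (m (i x) x) = x)
    (hB : ∀ x y z u w,
      m x (m (i x) (m y (m (i y) (i (m (i (m z u)) (i w)))))) =
      m y (m (i y) (m x (m (i x) (m (m w z) u))))) (z u w : S) :
    i (m (i (m z u)) (i w)) = m (m w z) u :=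
  eq_of_forall_exchange (t := fun a b => m a (m (i a) b)) hA fun x y => hB x y z u w

theorem two_base_derived_11 {S : Type*} (m : S → S → S) (i : S → S)
    (hA : ∀ x, m x (m (i x) x) = x)
    (hB : ∀ x y z u w,
      m x (m (i x) (m y (m (i y) (i (m (i (m z u)) (i w)))))) =
      m y (m (i y) (m x (m (i x) (m (m w z) u))))) :
    ∀ x y, m (m x y) (m (i y) y) = i (m (i y) (i x)) := by
  intro x y
  have h := inv_mul_inv_eq_mul_mul m i hA hB y (m (i y) y) x
  rw [hA y] at h
  exact h.symm
end

section
/- In the magma with x·(x'·x) = x and the long identity, the derived identity x·(x'·(y·(y'·(z·u)))) = y·(y'·(x·(x'·(z·u)))) holds. -/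
/-!
Write `[a]b` for `a·(a'·b)`, so that (A) reads `[a]a = a` and (B) reads `[x][y]N = [y][x]P`
with `N = ((z·u)'·w')'` and `P = (w·z)·u`. For any idempotent operation, such a swap law
forces `N = P`. Substituting `z'·z` for `z` and `z` for `w` then turns `P` into `z·u` by (A),
and (B) becomes the claimed identity.
-/

theorem eq_of_idem_of_swap {S : Type*} (T : S → S → S) (hT : ∀ x, T x x = x) {n p : S}
    (h : ∀ x y, T x (T y n) = T y (T x p)) : n = p := by
  have hpn : T p n = T n p := by simpa only [hT] using h p n
  calc n = T n (T n p) := by simpa only [hT] using h n n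
    _ = T n (T p n) := by rw [hpn]
    _ = T p (T n p) := h n p
    _ = T p (T p n) := by rw [hpn]
    _ = p := by simpa only [hT] using h p p

theorem two_base_derived_12 {S : Type*} (m : S → S → S) (i : S → S)
    (hA : ∀ x, m x (m (i x) x) = x)
    (hB : ∀ x y z u w,
      m x (m (i x) (m y (m (i y) (i (m (i (m z u)) (i w)))))) =
      m y (m (i y) (m x (m (i x) (m (m w z) u))))) :
    ∀ x y z u,
      m x (m (i x) (m y (m (i y) (m z u)))) =
      m y (m (i y) (m x (m (i x) (m z u)))) := by
  intro x y z u
  have h := hB x y (m (i z) z) u z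
  rwa [inv_mul_inv_eq_mul_mul m i hA hB, hA] at h
end

section
/- In the magma with x·(x'·x) = x, the long identity, and assuming additionally x'' = x, the derived identity (x·y)' = y'·x' holds. -/
/-!
Axioms (A) and (B) alone give the identity (K): `(w·z)·u = ((z·u)'·w')'`, so that `(w·z)·u`
depends only on `w` and `z·u`. Indeed, with `R x t = x·(x'·t)`, (A) says `R x x = x` and (B) says
`R x (R y p) = R y (R x q)` for `p`, `q` the two sides of (K); taking `x` and `y` among `p` and `q`
forces `p = q`. From (A), (C) and (K) one derives the partial associativity
`(x'·x)·u = x'·(x·u)` and then `((x·v)·u)' = (x·(v·u))'`, so that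
`(x·y)' = (x·(y·(y'·y)))' = ((x·y)·(y'·y))' = (y·(y'·y))'·x' = y'·x'`.
-/

/-- These laws characterise regular *-semigroups. -/
structure IsRegularStar {S : Type*} (m : S → S → S) (i : S → S) : Prop where
  mul_inv_mul_self (x : S) : m x (m (i x) x) = x
  inv_inv (x : S) : i (i x) = x
  mul_mul_eq (w z u : S) : m (m w z) u = i (m (i (m z u)) (i w))

section

variable {S : Type*} {m : S → S → S} {i : S → S}

local infixl:70 " ⬝ " => m
local postfix:max "˘" => i

theorem IsRegularStar.of_base (hA : ∀ x, x ⬝ (x˘ ⬝ x) = x)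
    (hB : ∀ x y z u w,
      x ⬝ (x˘ ⬝ (y ⬝ (y˘ ⬝ ((z ⬝ u)˘ ⬝ w˘)˘))) = y ⬝ (y˘ ⬝ (x ⬝ (x˘ ⬝ (w ⬝ z ⬝ u)))))
    (hC : ∀ x, x˘˘ = x) : IsRegularStar m i where
  mul_inv_mul_self := hA
  inv_inv := hC
  mul_mul_eq w z u := by
    set p := ((z ⬝ u)˘ ⬝ w˘)˘
    set q := w ⬝ z ⬝ u
    have hR : ∀ x y, x ⬝ (x˘ ⬝ (y ⬝ (y˘ ⬝ p))) = y ⬝ (y˘ ⬝ (x ⬝ (x˘ ⬝ q))) :=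
      fun x y => hB x y z u w
    have hpR : ∀ x, x ⬝ (x˘ ⬝ p) = p ⬝ (p˘ ⬝ (x ⬝ (x˘ ⬝ q))) := fun x => by
      simpa only [hA p] using hR x p
    have hpq : q ⬝ (q˘ ⬝ p) = p ⬝ (p˘ ⬝ q) := by rw [hpR q, hA q]
    symm
    calc p = p ⬝ (p˘ ⬝ p) := (hA p).symm
      _ = p ⬝ (p˘ ⬝ (p ⬝ (p˘ ⬝ q))) := hpR p
      _ = p ⬝ (p˘ ⬝ (q ⬝ (q˘ ⬝ p))) := by rw [hpq]
      _ = q ⬝ (q˘ ⬝ (p ⬝ (p˘ ⬝ q))) := hR p q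
      _ = q ⬝ (q˘ ⬝ (q ⬝ (q˘ ⬝ p))) := by rw [hpq]
      _ = q ⬝ (q˘ ⬝ (q ⬝ (q˘ ⬝ q))) := hR q q
      _ = q := by rw [hA q, hA q]

namespace IsRegularStar

theorem inv_mul_mul_inv_self (h : IsRegularStar m i) (x : S) : x˘ ⬝ (x ⬝ x˘) = x˘ := by
  simpa only [h.inv_inv] using h.mul_inv_mul_self x˘

theorem mul_mul_inv (h : IsRegularStar m i) (w z u : S) : (w ⬝ z ⬝ u)˘ = (z ⬝ u)˘ ⬝ w˘ := by
  rw [h.mul_mul_eq, h.inv_inv]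

theorem mul_inv_self_mul_inv_mul (h : IsRegularStar m i) (x u : S) :
    (x ⬝ x˘ ⬝ u)˘ ⬝ x = (x˘ ⬝ u)˘ := by
  simpa only [h.inv_mul_mul_inv_self, h.inv_inv] using (h.mul_mul_inv x˘ (x ⬝ x˘) u).symm

theorem mul_inv_self_mul_mul_inv_self (h : IsRegularStar m i) (x : S) :
    x ⬝ x˘ ⬝ (x ⬝ x˘) = (x ⬝ x˘)˘ := by
  rw [h.mul_mul_eq, h.inv_mul_mul_inv_self, h.inv_inv]

theorem mul_inv_mul_self' (h : IsRegularStar m i) (x : S) : x ⬝ x˘ ⬝ x = x :=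
  calc x ⬝ x˘ ⬝ x = (x ⬝ x˘ ⬝ (x ⬝ x˘))˘ ⬝ x := by
        rw [h.mul_inv_self_mul_mul_inv_self, h.inv_inv]
    _ = (x˘ ⬝ (x ⬝ x˘))˘ := h.mul_inv_self_mul_inv_mul x (x ⬝ x˘)
    _ = x := by rw [h.inv_mul_mul_inv_self, h.inv_inv]

theorem inv_mul_self_inv (h : IsRegularStar m i) (x : S) : (x˘ ⬝ x)˘ = x˘ ⬝ x := by
  simpa only [h.mul_inv_mul_self'] using (h.mul_inv_self_mul_inv_mul x x).symm

theorem mul_inv_self_inv (h : IsRegularStar m i) (x : S) : (x ⬝ x˘)˘ = x ⬝ x˘ := by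
  simpa only [h.inv_inv] using h.inv_mul_self_inv x˘

theorem mul_inv_mul_mul_inv_self (h : IsRegularStar m i) (x u : S) :
    (x ⬝ u)˘ ⬝ (x ⬝ x˘) = (x ⬝ u)˘ := by
  simpa only [h.mul_inv_mul_self', h.mul_inv_self_inv] using (h.mul_mul_inv (x ⬝ x˘) x u).symm

theorem inv_mul_mul_inv (h : IsRegularStar m i) (x u : S) : (x˘ ⬝ (x ⬝ u))˘ = (x ⬝ u)˘ ⬝ x :=
  calc (x˘ ⬝ (x ⬝ u))˘ = ((x ⬝ x˘ ⬝ x)˘ ⬝ (x ⬝ u)˘˘)˘ := by rw [h.mul_inv_mul_self', h.inv_inv]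
    _ = (x ⬝ u)˘ ⬝ (x ⬝ x˘) ⬝ x := (h.mul_mul_eq _ _ _).symm
    _ = (x ⬝ u)˘ ⬝ x := by rw [h.mul_inv_mul_mul_inv_self]

theorem inv_mul_self_mul (h : IsRegularStar m i) (x u : S) : x˘ ⬝ x ⬝ u = x˘ ⬝ (x ⬝ u) := by
  rw [h.mul_mul_eq, h.inv_inv, ← h.inv_mul_mul_inv, h.inv_inv]

theorem mul_inv_self_mul (h : IsRegularStar m i) (x u : S) : x ⬝ x˘ ⬝ u = x ⬝ (x˘ ⬝ u) := by
  simpa only [h.inv_inv] using h.inv_mul_self_mul x˘ u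

theorem mul_inv_mul_mul (h : IsRegularStar m i) (x u : S) : x ⬝ (x˘ ⬝ (x ⬝ u)) = x ⬝ u :=
  calc x ⬝ (x˘ ⬝ (x ⬝ u)) = x ⬝ x˘ ⬝ (x ⬝ u) := (h.mul_inv_self_mul x _).symm
    _ = ((x˘ ⬝ (x ⬝ u))˘ ⬝ x˘)˘ := h.mul_mul_eq _ _ _
    _ = x ⬝ (x˘ ⬝ x) ⬝ u := by rw [← h.inv_mul_self_mul, ← h.mul_mul_eq]
    _ = x ⬝ u := by rw [h.mul_inv_mul_self]

theorem inv_mul_inv_mul (h : IsRegularStar m i) (x y : S) : x˘ ⬝ y˘ ⬝ y = (y ⬝ x)˘ ⬝ y := by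
  rw [h.mul_mul_eq, h.inv_mul_self_inv, h.inv_inv, h.inv_mul_self_mul, h.inv_mul_mul_inv]

theorem mul_mul_inv_mul (h : IsRegularStar m i) (w z u : S) :
    (w ⬝ z ⬝ u)˘ ⬝ w = (w ⬝ (z ⬝ u))˘ ⬝ w := by
  rw [h.mul_mul_inv, h.inv_mul_inv_mul]

theorem mul_inv_mul_mul_inv (h : IsRegularStar m i) (x t : S) : (x ⬝ t)˘ ⬝ x ⬝ x˘ = (x ⬝ t)˘ := by
  rw [h.mul_mul_eq, h.mul_inv_self_inv, h.inv_inv, h.mul_inv_self_mul, h.mul_inv_mul_mul]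

theorem mul_mul_inv_assoc (h : IsRegularStar m i) (x v u : S) :
    (x ⬝ v ⬝ u)˘ = (x ⬝ (v ⬝ u))˘ :=
  calc (x ⬝ v ⬝ u)˘ = (x ⬝ (x˘ ⬝ (x ⬝ v)) ⬝ u)˘ := by rw [h.mul_inv_mul_mul]
    _ = (x ⬝ v ⬝ u)˘ ⬝ x ⬝ x˘ := by rw [h.mul_mul_inv, h.mul_mul_inv, h.inv_inv]
    _ = (x ⬝ (v ⬝ u))˘ ⬝ x ⬝ x˘ := by rw [h.mul_mul_inv_mul]
    _ = (x ⬝ (v ⬝ u))˘ := h.mul_inv_mul_mul_inv x _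

theorem mul_inv_rev (h : IsRegularStar m i) (x y : S) : (x ⬝ y)˘ = y˘ ⬝ x˘ :=
  calc (x ⬝ y)˘ = (x ⬝ (y ⬝ (y˘ ⬝ y)))˘ := by rw [h.mul_inv_mul_self]
    _ = (x ⬝ y ⬝ (y˘ ⬝ y))˘ := (h.mul_mul_inv_assoc x y _).symm
    _ = y˘ ⬝ x˘ := by rw [h.mul_mul_inv, h.mul_inv_mul_self]

end IsRegularStar

end

theorem two_base_derived_13 {S : Type*} (m : S → S → S) (i : S → S)
    (hA : ∀ x, m x (m (i x) x) = x)
    (hB : ∀ x y z u w,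
      m x (m (i x) (m y (m (i y) (i (m (i (m z u)) (i w)))))) =
      m y (m (i y) (m x (m (i x) (m (m w z) u)))))
    (hC : ∀ x, i (i x) = x) :
    ∀ x y, i (m x y) = m (i y) (i x) :=
  (IsRegularStar.of_base hA hB hC).mul_inv_rev
end

section
/- In the magma with x·(x'·x) = x and the long identity, the derived identity ((x'·x'')''·x')' = x holds. -/
/-! Write `x ▹ y` for `x·(x'·y)`. Identity (A) says `x ▹ x = x`, so (B) may be used with `y` equal
to its own inner term `t = ((z·u)'·w')'`; this shows that `t ▹ s = s ▹ t` for `s = (w·z)·u`, and a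
few more uses of (B) then give `s = t`, i.e. `(a·b)·c = ((b·c)'·a')'`. Two applications of this
law and (A) give the derived identity. -/

section

variable {S : Type*} (m : S → S → S) (i : S → S)

local infixl:70 " ∗ " => m
local notation:65 x:66 " ▹ " y:65 => x ∗ (i x ∗ y)

structure TwoBase : Prop where
  idem : ∀ x, x ▹ x = x
  exchange : ∀ x y z u w, x ▹ (y ▹ i (i (z ∗ u) ∗ i w)) = y ▹ (x ▹ (w ∗ z ∗ u))

variable {m i}

namespace TwoBase

theorem exchange_self (h : TwoBase m i) (a b c d : S) :
    a ▹ i (i (b ∗ c) ∗ i d) = i (i (b ∗ c) ∗ i d) ▹ (a ▹ (d ∗ b ∗ c)) := by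
  conv_lhs => rw [← h.idem (i (i (b ∗ c) ∗ i d))]
  exact h.exchange _ _ _ _ _

theorem absorb_comm (h : TwoBase m i) (a b c : S) :
    i (i (a ∗ b) ∗ i c) ▹ (c ∗ a ∗ b) = c ∗ a ∗ b ▹ i (i (a ∗ b) ∗ i c) := by
  rw [h.exchange_self, h.idem]

theorem mul_mul_eq (h : TwoBase m i) (a b c : S) : a ∗ b ∗ c = i (i (b ∗ c) ∗ i a) := by
  set s := a ∗ b ∗ c
  set t := i (i (b ∗ c) ∗ i a)
  calc s = s ▹ (s ▹ s) := by rw [h.idem, h.idem]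
    _ = s ▹ (s ▹ t) := (h.exchange s s b c a).symm
    _ = s ▹ (t ▹ s) := by rw [h.absorb_comm]
    _ = t ▹ (s ▹ t) := (h.exchange t s b c a).symm
    _ = t ▹ (t ▹ s) := by rw [h.absorb_comm]
    _ = t := by rw [← h.exchange_self, h.idem]

theorem inv_inv_mul_inv (h : TwoBase m i) (a b : S) : i (i a ∗ i b) = b ∗ a ∗ (i a ∗ a) := by
  rw [h.mul_mul_eq b a, h.idem]

end TwoBase

end

theorem two_base_derived_14 {S : Type*} (m : S → S → S) (i : S → S)
    (hA : ∀ x, m x (m (i x) x) = x)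
    (hB : ∀ x y z u w,
      m x (m (i x) (m y (m (i y) (i (m (i (m z u)) (i w)))))) =
      m y (m (i y) (m x (m (i x) (m (m w z) u))))) :
    ∀ x, i (m (i (i (m (i x) (i (i x))))) (i x)) = x := by
  have h : TwoBase m i := ⟨hA, hB⟩
  intro x
  calc i (m (i (i (m (i x) (i (i x))))) (i x))
      = i (m (i (m (m (i x) x) (m (i x) x))) (i x)) := by rw [h.inv_inv_mul_inv x (i x)]
    _ = m (m x (m (i x) x)) (m (i x) x) := (h.mul_mul_eq _ _ _).symm
    _ = x := by rw [h.idem, h.idem]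
end

section
/- In the magma with x·(x'·x) = x and the long identity, the derived identities x'·(x·x') = x' and x''·x' = x·x' hold. -/
/-!
Specialising the long identity to `y = ((z * u)⁻¹ * w⁻¹)⁻¹` and simplifying with
`x * (x⁻¹ * x) = x` gives `((z * u)⁻¹ * w⁻¹)⁻¹ = w * z * u`. Consequently `w * z * u` depends
only on `w` and `z * u`, and the long identity says that the maps `t ↦ x * (x⁻¹ * t)` commute.
A chain of equational consequences of these two facts shows that `x⁻¹⁻¹` acts on the left like
`x`, i.e. `x⁻¹⁻¹ * y = x * y`; both claimed identities follow at once, the first one from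
`x⁻¹ * (x⁻¹⁻¹ * x⁻¹) = x⁻¹`.
-/

class TwoBased (S : Type*) [Mul S] [Inv S] : Prop where
  mul_inv_mul_self (x : S) : x * (x⁻¹ * x) = x
  long_identity (x y z u w : S) :
    x * (x⁻¹ * (y * (y⁻¹ * ((z * u)⁻¹ * w⁻¹)⁻¹))) = y * (y⁻¹ * (x * (x⁻¹ * (w * z * u))))

namespace TwoBased

variable {S : Type*} [Mul S] [Inv S] [TwoBased S]

theorem inv_mul_inv_inv (x y z : S) : ((x * y)⁻¹ * z⁻¹)⁻¹ = z * x * y := by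
  set T := ((x * y)⁻¹ * z⁻¹)⁻¹
  set P := z * x * y
  have hB (t : S) : T * (T⁻¹ * (t * (t⁻¹ * P))) = t * (t⁻¹ * T) := by
    rw [← long_identity t T x y z, mul_inv_mul_self T]
  have hTP : T * (T⁻¹ * P) = P * (P⁻¹ * T) := by
    simpa only [mul_inv_mul_self P] using hB P
  calc T = T * (T⁻¹ * (P * (P⁻¹ * T))) := by rw [← hTP, hB T, mul_inv_mul_self]
    _ = P * (P⁻¹ * (P * (P⁻¹ * T))) := by rw [long_identity T P x y z, hTP]
    _ = P := by rw [long_identity P P x y z, mul_inv_mul_self, mul_inv_mul_self]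

theorem mul_mul_eq_of_mul_eq {a b c d : S} (h : a * b = c * d) (w : S) :
    w * a * b = w * c * d := by
  rw [← inv_mul_inv_inv, h, inv_mul_inv_inv]

theorem mul_inv_mul_comm (x y p : S) :
    x * (x⁻¹ * (y * (y⁻¹ * p))) = y * (y⁻¹ * (x * (x⁻¹ * p))) := by
  -- `p` has the shape `w * z * u` that the right-hand side of the long identity needs
  have hp : p * (p⁻¹ * p) * (p⁻¹ * p) = p := by rw [mul_inv_mul_self, mul_inv_mul_self]
  have h := long_identity x y (p⁻¹ * p) (p⁻¹ * p) p
  rwa [inv_mul_inv_inv, hp] at h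

theorem mul_mul_inv_mul_self (x y : S) :
    x * y * (y⁻¹ * y) = (y⁻¹ * x⁻¹)⁻¹ := by
  rw [← inv_mul_inv_inv, mul_inv_mul_self]

theorem mul_inv_mul_mul_inv_mul (x y : S) :
    x * (x⁻¹ * (y * (y⁻¹ * x))) = y * (y⁻¹ * x) := by
  rw [mul_inv_mul_comm, mul_inv_mul_self]

theorem mul_mul_inv_mul_mul_inv_mul (x y z : S) :
    x * y * (y⁻¹ * (z * (z⁻¹ * y))) = x * z * (z⁻¹ * y) :=
  mul_mul_eq_of_mul_eq (mul_inv_mul_mul_inv_mul y z) x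

theorem inv_mul_inv_inv_inv_inv_mul_inv_inv (x : S) :
    ((x⁻¹ * x⁻¹⁻¹)⁻¹⁻¹ * x⁻¹)⁻¹ = x := by
  calc ((x⁻¹ * x⁻¹⁻¹)⁻¹⁻¹ * x⁻¹)⁻¹
    _ = ((x⁻¹ * x * (x⁻¹ * x))⁻¹ * x⁻¹)⁻¹ := by rw [mul_mul_inv_mul_self]
    _ = x * (x⁻¹ * x) * (x⁻¹ * x) := by rw [inv_mul_inv_inv]
    _ = x := by rw [mul_inv_mul_self, mul_inv_mul_self]

theorem mul_inv_inv_mul_inv_mul_mul_inv (x y : S) :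
    x * y⁻¹⁻¹ * (y⁻¹ * y) * y⁻¹ = (y⁻¹ * x⁻¹)⁻¹ * y⁻¹ := by
  calc x * y⁻¹⁻¹ * (y⁻¹ * y) * y⁻¹
    _ = x * y⁻¹⁻¹ * (y⁻¹ * y) * (y⁻¹ * (y⁻¹⁻¹ * y⁻¹)) := by rw [mul_inv_mul_self]
    _ = x * y⁻¹⁻¹ * (y⁻¹ * (y⁻¹⁻¹ * y⁻¹)) * ((y⁻¹⁻¹ * y⁻¹)⁻¹ * (y * (y⁻¹ * (y⁻¹⁻¹ * y⁻¹)))) := by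
        rw [mul_mul_eq_of_mul_eq (mul_mul_inv_mul_mul_inv_mul (y⁻¹) (y⁻¹⁻¹ * y⁻¹) y).symm]
    _ = ((y⁻¹⁻¹ * y⁻¹)⁻¹ * x⁻¹)⁻¹ * ((y⁻¹⁻¹ * y⁻¹)⁻¹ * (y * (y⁻¹ * (y⁻¹⁻¹ * y⁻¹)))) := by
        rw [mul_inv_mul_self, inv_mul_inv_inv]
    _ = x * (y⁻¹⁻¹ * y⁻¹) * ((y⁻¹⁻¹ * y⁻¹)⁻¹ * (y⁻¹⁻¹ * y⁻¹)) *
          ((y⁻¹⁻¹ * y⁻¹)⁻¹ * (y * (y⁻¹ * (y⁻¹⁻¹ * y⁻¹)))) := by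
        rw [← mul_mul_inv_mul_self]
    _ = x * (y⁻¹⁻¹ * y⁻¹) * ((y⁻¹⁻¹ * y⁻¹)⁻¹ * y) * (y⁻¹ * (y⁻¹⁻¹ * y⁻¹)) := by
        rw [mul_mul_eq_of_mul_eq (mul_mul_inv_mul_mul_inv_mul ((y⁻¹⁻¹ * y⁻¹)⁻¹) (y⁻¹⁻¹ * y⁻¹) y)]
    _ = (((y⁻¹⁻¹ * y⁻¹ * ((y⁻¹⁻¹ * y⁻¹)⁻¹ * y) * (y⁻¹ * (y⁻¹⁻¹ * y⁻¹)))⁻¹ * y⁻¹⁻¹)⁻¹⁻¹ *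
          (x * y)⁻¹)⁻¹ := by
        rw [← mul_mul_inv_mul_mul_inv_mul, ← inv_mul_inv_inv, ← inv_mul_inv_inv]
    _ = (((y⁻¹⁻¹ * y⁻¹ * ((y⁻¹⁻¹ * y⁻¹)⁻¹ * (y⁻¹⁻¹ * y⁻¹)) *
          ((y⁻¹⁻¹ * y⁻¹)⁻¹ * (y * (y⁻¹ * (y⁻¹⁻¹ * y⁻¹)))))⁻¹ * y⁻¹⁻¹)⁻¹⁻¹ * (x * y)⁻¹)⁻¹ := by
        rw [mul_mul_eq_of_mul_eq
          (mul_mul_inv_mul_mul_inv_mul ((y⁻¹⁻¹ * y⁻¹)⁻¹) (y⁻¹⁻¹ * y⁻¹) y).symm]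
    _ = (((y * (y⁻¹ * (y⁻¹⁻¹ * y⁻¹)))⁻¹ * y⁻¹⁻¹)⁻¹⁻¹ * (x * y)⁻¹)⁻¹ := by
        rw [mul_inv_mul_self, mul_inv_mul_mul_inv_mul]
    _ = (y⁻¹ * x⁻¹)⁻¹ * y⁻¹ := by
        rw [inv_mul_inv_inv, inv_mul_inv_inv, mul_mul_inv_mul_self, mul_inv_mul_self]

theorem mul_inv_inv_mul_inv_inv_mul_inv_mul_inv (x y : S) :
    x * y⁻¹⁻¹ * (y⁻¹⁻¹ * (y⁻¹ * y))⁻¹ = x * y⁻¹⁻¹ * y⁻¹ := by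
  calc x * y⁻¹⁻¹ * (y⁻¹⁻¹ * (y⁻¹ * y))⁻¹
    _ = (y⁻¹⁻¹ * (y⁻¹ * y) * y⁻¹ * (y⁻¹⁻¹ * y⁻¹) * x⁻¹)⁻¹ := by
        rw [← inv_mul_inv_inv, mul_mul_inv_mul_self]
    _ = (((y⁻¹ * y * (y⁻¹ * (y⁻¹⁻¹ * y⁻¹)))⁻¹ * y⁻¹⁻¹⁻¹)⁻¹ * (y⁻¹⁻¹ * y⁻¹) * x⁻¹)⁻¹ := by
        rw [inv_mul_inv_inv, mul_inv_mul_self]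
    _ = (((y⁻¹ * ((y⁻¹⁻¹ * y⁻¹)⁻¹ * (y * (y⁻¹ * (y⁻¹⁻¹ * y⁻¹)))))⁻¹ * y⁻¹⁻¹⁻¹)⁻¹ *
          (y⁻¹⁻¹ * y⁻¹) * x⁻¹)⁻¹ := by
        rw [← mul_mul_inv_mul_mul_inv_mul, mul_inv_mul_self]
    _ = (((y⁻¹ * ((y⁻¹⁻¹ * y⁻¹)⁻¹ * (y * y⁻¹)))⁻¹ * y⁻¹⁻¹⁻¹)⁻¹ * (y⁻¹⁻¹ * y⁻¹) * x⁻¹)⁻¹ := by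
        rw [mul_inv_mul_self]
    _ = (y⁻¹⁻¹ * y⁻¹ * ((y⁻¹⁻¹ * y⁻¹)⁻¹ * (y * (y⁻¹ * (y⁻¹⁻¹ * y⁻¹)))) * (y⁻¹⁻¹ * y⁻¹) *
          x⁻¹)⁻¹ := by
        rw [inv_mul_inv_inv, mul_inv_mul_self]
    _ = x * y⁻¹⁻¹ * y⁻¹ := by
        rw [mul_inv_mul_mul_inv_mul, mul_inv_mul_self, mul_mul_inv_mul_self, inv_mul_inv_inv]

theorem mul_inv_inv_mul_inv_mul_inv_inv_mul_inv_inv_inv_inv_inv_inv (x y : S) :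
    x * (y⁻¹⁻¹ * y⁻¹) * (y⁻¹⁻¹ * y⁻¹⁻¹⁻¹)⁻¹⁻¹⁻¹ = ((y * y⁻¹⁻¹⁻¹)⁻¹⁻¹ * x⁻¹)⁻¹ := by
  calc x * (y⁻¹⁻¹ * y⁻¹) * (y⁻¹⁻¹ * y⁻¹⁻¹⁻¹)⁻¹⁻¹⁻¹
    _ = ((y⁻¹⁻¹ * (y⁻¹⁻¹⁻¹ * y⁻¹⁻¹) * y⁻¹ * (y⁻¹⁻¹ * y⁻¹⁻¹⁻¹)⁻¹⁻¹⁻¹)⁻¹ * x⁻¹)⁻¹ := by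
        rw [← inv_mul_inv_inv, mul_inv_mul_self]
    _ = ((y⁻¹⁻¹ * (y⁻¹⁻¹⁻¹ * y⁻¹⁻¹) * (y⁻¹⁻¹ * (y⁻¹ * y))⁻¹ * (y⁻¹⁻¹ * y⁻¹⁻¹⁻¹)⁻¹⁻¹⁻¹)⁻¹ *
          x⁻¹)⁻¹ := by
        rw [mul_mul_eq_of_mul_eq (mul_inv_inv_mul_inv_inv_mul_inv_mul_inv (y⁻¹⁻¹⁻¹) y).symm]
    _ = ((((y⁻¹⁻¹ * (y⁻¹ * y))⁻¹ * (y⁻¹⁻¹ * y⁻¹⁻¹⁻¹)⁻¹⁻¹⁻¹)⁻¹ * y⁻¹⁻¹⁻¹)⁻¹⁻¹ * x⁻¹)⁻¹ := by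
        rw [mul_inv_mul_self, ← inv_mul_inv_inv]
    _ = (((y⁻¹ * y * y⁻¹⁻¹⁻¹)⁻¹ * ((y⁻¹⁻¹ * y⁻¹⁻¹⁻¹)⁻¹⁻¹ * y⁻¹⁻¹)⁻¹)⁻¹⁻¹⁻¹ * x⁻¹)⁻¹ := by
        rw [inv_mul_inv_inv (y⁻¹⁻¹) (y⁻¹ * y) ((y⁻¹⁻¹ * y⁻¹⁻¹⁻¹)⁻¹⁻¹), ← inv_mul_inv_inv]
    _ = ((y * y⁻¹⁻¹⁻¹)⁻¹⁻¹ * x⁻¹)⁻¹ := by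
        rw [inv_mul_inv_inv_inv_inv_mul_inv_inv, inv_mul_inv_inv, mul_inv_mul_self]

theorem inv_mul_inv_inv_mul_inv_mul_inv_mul (x y z : S) :
    ((x⁻¹ * y⁻¹)⁻¹ * (x⁻¹ * x))⁻¹ * z = x⁻¹ * y⁻¹ * z := by
  calc ((x⁻¹ * y⁻¹)⁻¹ * (x⁻¹ * x))⁻¹ * z
    _ = ((x⁻¹ * (x⁻¹⁻¹ * x⁻¹) * x⁻¹⁻¹)⁻¹⁻¹ * (y * x)⁻¹)⁻¹⁻¹ * z := by
        rw [← mul_mul_inv_mul_self, ← inv_mul_inv_inv, mul_mul_inv_mul_self, mul_inv_mul_self]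
    _ = (((x⁻¹⁻¹ * x⁻¹ * x⁻¹⁻¹)⁻¹ * ((x⁻¹⁻¹⁻¹ * x⁻¹⁻¹⁻¹⁻¹)⁻¹⁻¹ * x⁻¹⁻¹⁻¹)⁻¹)⁻¹⁻¹⁻¹ *
          (y * x)⁻¹)⁻¹⁻¹ * z := by
        rw [← inv_mul_inv_inv, inv_mul_inv_inv_inv_inv_mul_inv_inv]
    _ = (((x⁻¹⁻¹ * (x⁻¹⁻¹⁻¹ * x⁻¹⁻¹) * (x⁻¹⁻¹⁻¹ * x⁻¹⁻¹⁻¹⁻¹)⁻¹⁻¹⁻¹)⁻¹ * x⁻¹⁻¹)⁻¹⁻¹ *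
          (y * x)⁻¹)⁻¹⁻¹ * z := by
        rw [inv_mul_inv_inv, mul_inv_inv_mul_inv_mul_mul_inv, mul_inv_mul_self]
    _ = ((((x⁻¹⁻¹⁻¹ * x * (x⁻¹ * x))⁻¹ * x⁻¹⁻¹⁻¹)⁻¹⁻¹ * x⁻¹⁻¹)⁻¹⁻¹ * (y * x)⁻¹)⁻¹⁻¹ * z := by
        rw [mul_inv_inv_mul_inv_mul_inv_inv_mul_inv_inv_inv_inv_inv_inv, mul_mul_inv_mul_self]
    _ = (((x⁻¹⁻¹ * (x⁻¹⁻¹⁻¹ * x) * (x⁻¹ * x))⁻¹ * x⁻¹⁻¹)⁻¹⁻¹ * (y * x)⁻¹)⁻¹⁻¹ * z := by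
        rw [inv_mul_inv_inv]
    _ = ((x⁻¹⁻¹⁻¹ * x * (x⁻¹ * x))⁻¹ * (y * x⁻¹⁻¹)⁻¹)⁻¹⁻¹ * z := by
        rw [inv_mul_inv_inv, inv_mul_inv_inv, mul_mul_inv_mul_mul_inv_mul, ← inv_mul_inv_inv]
    _ = (y * x⁻¹⁻¹ * (x⁻¹⁻¹⁻¹ * x⁻¹⁻¹) * (x⁻¹⁻¹⁻¹ * x⁻¹⁻¹⁻¹⁻¹)⁻¹⁻¹⁻¹)⁻¹ * z := by
        rw [mul_mul_inv_mul_self, ← mul_inv_inv_mul_inv_mul_inv_inv_mul_inv_inv_inv_inv_inv_inv]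
    _ = (x⁻¹⁻¹⁻¹ * x⁻¹⁻¹⁻¹⁻¹)⁻¹⁻¹ * x⁻¹⁻¹⁻¹ * y⁻¹ * z := by
        rw [mul_mul_inv_mul_self, inv_mul_inv_inv]
    _ = x⁻¹ * y⁻¹ * z := by
        rw [← inv_mul_inv_inv, inv_mul_inv_inv_inv_inv_mul_inv_inv, inv_mul_inv_inv]

theorem inv_mul_inv_inv_mul_inv_mul (x y z u : S) :
    ((x⁻¹ * y⁻¹)⁻¹ * z)⁻¹ * u = (x * z)⁻¹ * y⁻¹ * u := by
  calc ((x⁻¹ * y⁻¹)⁻¹ * z)⁻¹ * u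
    _ = (y * x * (x⁻¹ * x) * z)⁻¹ * u := by rw [← mul_mul_inv_mul_self]
    _ = (((((x * z)⁻¹ * (x * z)⁻¹⁻¹)⁻¹⁻¹ * (x * z)⁻¹)⁻¹⁻¹ * x⁻¹⁻¹)⁻¹⁻¹ * (y * x)⁻¹)⁻¹⁻¹ * u := by
        rw [← inv_mul_inv_inv, ← inv_mul_inv_inv, inv_mul_inv_inv_inv_inv_mul_inv_inv]
    _ = (((((x * z)⁻¹ * x * z)⁻¹ * (x * z)⁻¹)⁻¹⁻¹ * x⁻¹⁻¹)⁻¹⁻¹ * (y * x)⁻¹)⁻¹⁻¹ * u := by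
        rw [inv_mul_inv_inv]
    _ = (y * (x * z) * ((x * z)⁻¹ * x) * z)⁻¹ * u := by
        rw [inv_mul_inv_inv, inv_mul_inv_inv, inv_mul_inv_inv, mul_mul_inv_mul_mul_inv_mul]
    _ = (((x * z)⁻¹ * (x * z) * ((x * z)⁻¹ * (x * z)))⁻¹ * (y * (x * z))⁻¹)⁻¹⁻¹ * u := by
        rw [← inv_mul_inv_inv, ← inv_mul_inv_inv, mul_mul_inv_mul_self]
    _ = (y * x * z * ((x * z)⁻¹ * (x * z)))⁻¹ * u := by
        rw [inv_mul_inv_inv, mul_mul_inv_mul_self, inv_mul_inv_inv]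
    _ = (((x * z)⁻¹ * y⁻¹)⁻¹ * ((x * z)⁻¹ * (x * z)))⁻¹ * u := by rw [inv_mul_inv_inv]
    _ = (x * z)⁻¹ * y⁻¹ * u := by rw [inv_mul_inv_inv_mul_inv_mul_inv_mul]

theorem mul_inv_inv_mul_inv_mul (x y z u : S) :
    (x * y⁻¹)⁻¹ * z⁻¹ * u = y * x⁻¹ * z⁻¹ * u := by
  rw [← inv_mul_inv_inv_mul_inv_mul, inv_mul_inv_inv]

theorem mul_inv_mul_inv_inv_mul_inv_mul (x y z : S) :
    x * y⁻¹ * y⁻¹⁻¹ * y⁻¹ * z = (y * x⁻¹)⁻¹ * z := by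
  calc x * y⁻¹ * y⁻¹⁻¹ * y⁻¹ * z
    _ = ((y⁻¹ * y⁻¹⁻¹)⁻¹ * x⁻¹)⁻¹ * y⁻¹ * z := by rw [inv_mul_inv_inv]
    _ = (((y⁻¹ * y⁻¹⁻¹)⁻¹⁻¹ * y⁻¹)⁻¹ * x⁻¹)⁻¹ * z := by
        rw [mul_inv_inv_mul_inv_mul, inv_mul_inv_inv]
    _ = (y * x⁻¹)⁻¹ * z := by rw [inv_mul_inv_inv_inv_inv_mul_inv_inv]

theorem inv_mul_mul_inv_mul (x : S) :
    x⁻¹ * (x * x⁻¹) * x = x⁻¹ * x := by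
  calc x⁻¹ * (x * x⁻¹) * x
    _ = ((x * (x⁻¹ * x) * ((x⁻¹ * x)⁻¹ * (x⁻¹ * x)))⁻¹ * x⁻¹⁻¹)⁻¹ := by
        rw [← inv_mul_inv_inv, ← inv_mul_inv_inv, mul_mul_inv_mul_self]
    _ = x⁻¹ * x := by rw [mul_inv_mul_self, inv_mul_inv_inv, mul_inv_mul_self]

theorem inv_inv_mul_inv_mul_mul_inv_mul_mul_inv (x y : S) :
    x⁻¹⁻¹ * (x⁻¹ * x) * (x⁻¹ * x) * y⁻¹ = x * y⁻¹ := by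
  calc x⁻¹⁻¹ * (x⁻¹ * x) * (x⁻¹ * x) * y⁻¹
    _ = ((((x * x⁻¹ * x)⁻¹ * x⁻¹⁻¹)⁻¹ * y⁻¹)⁻¹ * (x⁻¹⁻¹ * (x⁻¹ * x))⁻¹)⁻¹ := by
        rw [← inv_mul_mul_inv_mul, ← inv_mul_inv_inv, ← inv_mul_inv_inv (x * x⁻¹) x (x⁻¹)]
    _ = (y * (x * x⁻¹ * x)⁻¹ * x⁻¹⁻¹ * x⁻¹)⁻¹ := by
        rw [inv_mul_inv_inv ((x * x⁻¹ * x)⁻¹) (x⁻¹⁻¹) y, mul_inv_inv_mul_inv_inv_mul_inv_mul_inv]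
    _ = ((x⁻¹ * (x * x⁻¹) * x * y⁻¹)⁻¹ * x⁻¹)⁻¹ := by
        rw [← inv_mul_inv_inv ((x * x⁻¹ * x)⁻¹) (x⁻¹⁻¹) y, inv_mul_inv_inv (x * x⁻¹) x (x⁻¹)]
    _ = x * y⁻¹ := by rw [inv_mul_inv_inv, inv_mul_mul_inv_mul, mul_inv_mul_self]

theorem inv_mul_mul_inv_inv_inv_mul (x y z : S) :
    (x⁻¹ * (y * x⁻¹)⁻¹)⁻¹ * z = y * x⁻¹ * x⁻¹⁻¹ * z := by
  calc (x⁻¹ * (y * x⁻¹)⁻¹)⁻¹ * z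
    _ = ((x⁻¹ * x⁻¹⁻¹)⁻¹ * y⁻¹)⁻¹ * x⁻¹⁻¹⁻¹ * x⁻¹⁻¹ * z := by
        rw [← mul_inv_mul_inv_inv_mul_inv_mul, inv_mul_inv_inv]
    _ = (((x⁻¹ * x * (x⁻¹ * x))⁻¹ * x⁻¹⁻¹⁻¹)⁻¹ * y⁻¹)⁻¹ * x⁻¹⁻¹ * z := by
        rw [mul_inv_inv_mul_inv_mul, ← mul_mul_inv_mul_self, inv_mul_inv_inv]
    _ = (x⁻¹⁻¹ * (x⁻¹ * x) * (x⁻¹ * x) * y⁻¹)⁻¹ * x⁻¹⁻¹ * z := by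
        rw [inv_mul_inv_inv (x⁻¹ * x) (x⁻¹ * x) (x⁻¹⁻¹)]
    _ = y * x⁻¹ * x⁻¹⁻¹ * z := by
        rw [inv_inv_mul_inv_mul_mul_inv_mul_mul_inv, mul_inv_inv_mul_inv_mul]

theorem inv_mul_inv_inv_mul_inv_mul_self (x y : S) :
    x⁻¹ * x⁻¹⁻¹ * x⁻¹ * y = x⁻¹ * y := by
  calc x⁻¹ * x⁻¹⁻¹ * x⁻¹ * y
    _ = ((x⁻¹ * y)⁻¹ * (x⁻¹ * x * (x⁻¹ * x)))⁻¹ := by rw [← inv_mul_inv_inv, mul_mul_inv_mul_self]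
    _ = ((x⁻¹ * x⁻¹⁻¹)⁻¹ * (x⁻¹ * x))⁻¹ * x⁻¹ * y := by
        rw [← inv_mul_inv_inv, inv_mul_inv_inv, ← inv_mul_inv_inv_mul_inv_mul]
    _ = x⁻¹ * y := by
        rw [← inv_mul_inv_inv_mul_inv_mul, inv_mul_inv_inv_inv_inv_mul_inv_inv, mul_inv_mul_self]

theorem inv_inv_mul_inv_mul_inv_inv_inv_inv (x : S) :
    (x⁻¹⁻¹ * (x⁻¹ * x⁻¹⁻¹)⁻¹)⁻¹ = x⁻¹ := by
  rw [← mul_mul_inv_mul_self, inv_mul_inv_inv_mul_inv_mul_self, mul_inv_mul_self]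

theorem inv_mul_inv_inv_inv_mul (x y : S) :
    (x⁻¹ * x⁻¹⁻¹)⁻¹ * y = x⁻¹ * x⁻¹⁻¹ * y := by
  calc (x⁻¹ * x⁻¹⁻¹)⁻¹ * y
    _ = x⁻¹ * x⁻¹⁻¹ * x⁻¹⁻¹⁻¹ * x⁻¹⁻¹ * y := by rw [← mul_inv_mul_inv_inv_mul_inv_mul]
    _ = x⁻¹ * x⁻¹⁻¹ * y := by
        rw [← inv_mul_mul_inv_inv_inv_mul, inv_inv_mul_inv_mul_inv_inv_inv_inv]

theorem inv_mul_inv_inv_inv_inv (x : S) :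
    (x⁻¹ * x⁻¹⁻¹)⁻¹⁻¹ = x⁻¹ * x⁻¹⁻¹ := by
  calc (x⁻¹ * x⁻¹⁻¹)⁻¹⁻¹
    _ = ((x⁻¹⁻¹ * (x⁻¹ * x⁻¹⁻¹)⁻¹)⁻¹ * x⁻¹⁻¹)⁻¹⁻¹ := by rw [inv_inv_mul_inv_mul_inv_inv_inv_inv]
    _ = (x⁻¹ * x⁻¹⁻¹ * (x⁻¹ * x⁻¹⁻¹)⁻¹)⁻¹ := by rw [inv_mul_inv_inv]
    _ = x⁻¹ * x⁻¹⁻¹ := by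
        rw [← inv_mul_inv_inv_inv_mul, inv_mul_inv_inv, inv_mul_inv_inv_mul_inv_mul_self]

theorem inv_inv_mul_inv_mul_inv_inv_mul (x y : S) :
    x⁻¹⁻¹ * x⁻¹ * x⁻¹⁻¹ * y = x * y := by
  calc x⁻¹⁻¹ * x⁻¹ * x⁻¹⁻¹ * y
    _ = (x * x⁻¹⁻¹⁻¹)⁻¹ * x⁻¹⁻¹ * y := by rw [← mul_inv_inv_mul_inv_mul]
    _ = ((x⁻¹ * x⁻¹⁻¹)⁻¹⁻¹ * x⁻¹⁻¹⁻¹)⁻¹ * y := by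
        rw [← inv_mul_inv_inv_mul_inv_mul, inv_mul_inv_inv_inv_mul, inv_mul_inv_inv_inv_inv]
    _ = ((x⁻¹ * x * (x⁻¹ * x))⁻¹ * x⁻¹⁻¹⁻¹)⁻¹ * y := by rw [mul_mul_inv_mul_self]
    _ = x⁻¹⁻¹ * (x⁻¹ * x) * (x⁻¹ * x) * ((y⁻¹ * y * (y⁻¹ * y))⁻¹ * y⁻¹)⁻¹ := by
        rw [inv_mul_inv_inv, inv_mul_inv_inv, mul_inv_mul_self, mul_inv_mul_self]
    _ = x * ((y⁻¹ * y * (y⁻¹ * y))⁻¹ * y⁻¹)⁻¹ := by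
        rw [inv_inv_mul_inv_mul_mul_inv_mul_mul_inv]
    _ = x * y := by rw [inv_mul_inv_inv, mul_inv_mul_self, mul_inv_mul_self]

theorem mul_inv_inv_inv_inv (x : S) :
    (x * x⁻¹⁻¹⁻¹)⁻¹ = x⁻¹⁻¹ * x⁻¹ := by
  calc (x * x⁻¹⁻¹⁻¹)⁻¹
    _ = (((x⁻¹ * x⁻¹⁻¹)⁻¹⁻¹ * x⁻¹)⁻¹ * x⁻¹⁻¹⁻¹)⁻¹ := by rw [inv_mul_inv_inv_inv_inv_mul_inv_inv]
    _ = x⁻¹⁻¹ * x⁻¹ := by rw [inv_mul_inv_inv, inv_mul_inv_inv_inv_inv, inv_mul_mul_inv_mul]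

theorem inv_inv_mul_inv_mul (x y : S) :
    x⁻¹⁻¹ * x⁻¹ * y = x * x⁻¹ * y := by
  calc x⁻¹⁻¹ * x⁻¹ * y
    _ = (x * x⁻¹⁻¹⁻¹)⁻¹ * y := by rw [← mul_inv_inv_inv_inv]
    _ = x * x⁻¹ * y := by rw [← mul_inv_mul_inv_inv_mul_inv_mul, inv_inv_mul_inv_mul_inv_inv_mul]

theorem mul_inv_mul_inv_inv_mul (x y : S) :
    x * x⁻¹ * x⁻¹⁻¹ * y = x * y := by
  rw [← inv_inv_mul_inv_mul, inv_inv_mul_inv_mul_inv_inv_mul]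

theorem mul_inv_mul_mul_inv_inv (x y : S) :
    x * y⁻¹ * (y * y⁻¹)⁻¹ = (y * x⁻¹)⁻¹ := by
  rw [← inv_mul_inv_inv, inv_mul_mul_inv_inv_inv_mul, mul_inv_mul_inv_inv_mul]

theorem inv_inv_mul (x y : S) :
    x⁻¹⁻¹ * y = x * y := by
  calc x⁻¹⁻¹ * y
    _ = (x⁻¹ * (x⁻¹⁻¹ * x⁻¹))⁻¹ * y := by rw [mul_inv_mul_self]
    _ = (x⁻¹ * (x * x⁻¹⁻¹⁻¹)⁻¹)⁻¹ * y := by rw [← mul_inv_inv_inv_inv]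
    _ = (x⁻¹ * (x⁻¹⁻¹ * x⁻¹ * (x * x⁻¹)⁻¹))⁻¹ * y := by rw [mul_inv_mul_mul_inv_inv]
    _ = (x⁻¹ * (x * x⁻¹ * (x * x⁻¹)⁻¹))⁻¹ * y := by rw [inv_inv_mul_inv_mul]
    _ = x * y := by
        rw [mul_inv_mul_mul_inv_inv, inv_mul_mul_inv_inv_inv_mul, mul_inv_mul_inv_inv_mul]

theorem inv_mul_mul_inv (x : S) : x⁻¹ * (x * x⁻¹) = x⁻¹ := by
  rw [← inv_inv_mul x x⁻¹, mul_inv_mul_self]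

end TwoBased

theorem two_base_derived_15 {S : Type*} (m : S → S → S) (i : S → S)
    (hA : ∀ x, m x (m (i x) x) = x)
    (hB : ∀ x y z u w,
      m x (m (i x) (m y (m (i y) (i (m (i (m z u)) (i w)))))) =
      m y (m (i y) (m x (m (i x) (m (m w z) u))))) :
    (∀ x, m (i x) (m x (i x)) = i x) ∧ (∀ x, m (i (i x)) (i x) = m x (i x)) := by
  let _ : Mul S := ⟨m⟩
  let _ : Inv S := ⟨i⟩
  have : TwoBased S := ⟨hA, hB⟩
  exact ⟨TwoBased.inv_mul_mul_inv, fun x => TwoBased.inv_inv_mul x x⁻¹⟩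
end
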